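/- Lambda-lifted terms only modify locations in their environment: if M is a lambda-lifted term (evaluated with empty closure environments, i.e. in the call rule the captured environment is empty) and M, s ⇓_{ρ, F} v, s' under the naive semantics, then s and s' agree on dom(s) \ Im(ρ). -/

import Mathlib

namespace CPC

abbrev Loc := Nat
abbrev Var := String

inductive Val : Type
  | unit | tt | ff
  | nat (n : Nat)
deriving DecidableEq

inductive Tm : Type
  | val (v : Val)
  | var (x : Var)
  | assign (x : Var) (t : Tm)
  | ite (c t e : Tm)
  | seq (a b : Tm)
  | letrec (f : Var) (ps : List Var) (body rest : Tm)
  | call (f : Var) (args : List Tm)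

abbrev Env := Var → Option Loc
abbrev Store := Loc → Option Val

def emptyEnv : Env := fun _ => none
def emptyStore : Store := fun _ => none

/-- Modification (extension) of a partial function. -/
def updFn {α β : Type} [DecidableEq α] (f : α → Option β) (x : α) (y : β) :
    α → Option β :=
  fun t => if t = x then some y else f t

/-- Concatenation of environments: leftmost binding wins. -/
def envCat (ρ₁ ρ₂ : Env) : Env := fun x => (ρ₁ x).orElse (fun _ => ρ₂ x)

def single (x : Var) (l : Loc) : Env := updFn emptyEnv x l

def envIm (ρ : Env) : Set Loc := {l | ∃ x, ρ x = some l}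
def envDom (ρ : Env) : Set Var := {x | ρ x ≠ none}
def storeDom (s : Store) : Set Loc := {l | s l ≠ none}

open Classical in
/-- Cleaning of a store with respect to an environment. -/
noncomputable def clean (ρ : Env) (s : Store) : Store :=
  fun l => if l ∈ envIm ρ then none else s l

open Classical in
/-- Restriction of a store to a set of locations. -/
noncomputable def resStore (s : Store) (D : Set Loc) : Store :=
  fun l => if l ∈ D then s l else none

/-- Store extension: `t` agrees with `s` on `dom s`. -/
def StoreLe (s t : Store) : Prop := ∀ l ∈ storeDom s, t l = s l

/-- Environment binding a list of variables to a list of locations. -/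
def envOf (xs : List Var) (ls : List Loc) : Env := fun y => (xs.zip ls).lookup y

/-- Store updated with a list of locations bound to a list of values. -/
def updStore (s : Store) (ls : List Loc) (vs : List Val) : Store :=
  fun l => ((ls.zip vs).lookup l).orElse (fun _ => s l)

/-- Closures: parameters, body, captured variable environment,
    captured function environment. -/
inductive Clos : Type
  | mk (ps : List Var) (body : Tm) (ρ : Env) (F : List (Var × Clos))

abbrev FEnv := List (Var × Clos)

def lookupF (F : FEnv) (f : Var) : Option Clos := F.lookup f

/-- `LocIn l F`: the location `l` appears in `F`
    (in some environment captured, recursively, in a closure of `F`). -/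
inductive LocIn : Loc → FEnv → Prop
  | env {l : Loc} {F : FEnv} {f ps body ρ F'} :
      (f, Clos.mk ps body ρ F') ∈ F → l ∈ envIm ρ → LocIn l F
  | deep {l : Loc} {F : FEnv} {f ps body ρ F'} :
      (f, Clos.mk ps body ρ F') ∈ F → LocIn l F' → LocIn l F

/-! ### Naive big-step reduction rules (with derivation height) -/

mutual
inductive EvalN : Nat → Env → FEnv → Tm → Store → Val → Store → Prop
  | val {ρ : Env} {F : FEnv} {v s} : EvalN 1 ρ F (.val v) s v s
  | var {ρ : Env} {F : FEnv} {x l s w} :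
      ρ x = some l → s l = some w → EvalN 1 ρ F (.var x) s w s
  | assign {n} {ρ : Env} {F : FEnv} {a s v s' x l} :
      EvalN n ρ F a s v s' → ρ x = some l → l ∈ storeDom s' →
      EvalN (n+1) ρ F (.assign x a) s .unit (updFn s' l v)
  | seq {n m} {ρ : Env} {F : FEnv} {a b s v s' v' s''} :
      EvalN n ρ F a s v s' → EvalN m ρ F b s' v' s'' →
      EvalN (n+m+1) ρ F (.seq a b) s v' s''
  | ifT {n m} {ρ : Env} {F : FEnv} {c b e s s' v s''} :
      EvalN n ρ F c s .tt s' → EvalN m ρ F b s' v s'' →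
      EvalN (n+m+1) ρ F (.ite c b e) s v s''
  | ifF {n m} {ρ : Env} {F : FEnv} {c b e s s' v s''} :
      EvalN n ρ F c s .ff s' → EvalN m ρ F e s' v s'' →
      EvalN (n+m+1) ρ F (.ite c b e) s v s''
  | letrec {n} {ρ : Env} {F : FEnv} {f ps a b s v s'} :
      EvalN n ρ ((f, Clos.mk ps a ρ F) :: F) b s v s' →
      EvalN (n+1) ρ F (.letrec f ps a b) s v s'
  | call {n m} {ρ : Env} {F : FEnv} {f args s₁ vs s₂ xs b} {ρ' : Env} {F' : FEnv}
      {ls : List Loc} {v s'} :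
      lookupF F f = some (Clos.mk xs b ρ' F') →
      EvalNArgs n ρ F args s₁ vs s₂ →
      ls.length = xs.length → vs.length = xs.length → ls.Nodup →
      (∀ l ∈ ls, l ∉ storeDom s₂ ∧ ¬ LocIn l ((f, Clos.mk xs b ρ' F') :: F')) →
      EvalN m (envCat (envOf xs ls) ρ') ((f, Clos.mk xs b ρ' F') :: F')
        b (updStore s₂ ls vs) v s' →
      EvalN (n+m+1) ρ F (.call f args) s₁ v s'

inductive EvalNArgs : Nat → Env → FEnv → List Tm → Store → List Val → Store → Prop
  | nil {ρ : Env} {F : FEnv} {s} : EvalNArgs 0 ρ F [] s [] s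
  | cons {n m} {ρ : Env} {F : FEnv} {a as s v s' vs s''} :
      EvalN n ρ F a s v s' → EvalNArgs m ρ F as s' vs s'' →
      EvalNArgs (n+m) ρ F (a :: as) s (v :: vs) s''
end

/-! ### Intermediate big-step reduction rules (split environments,
      minimal stores, non-compact closures) -/

mutual
inductive EvalI : Nat → Env → Env → FEnv → Tm → Store → Val → Store → Prop
  | val {ρT ρ : Env} {F : FEnv} {v s} :
      EvalI 1 ρT ρ F (.val v) s v (clean ρT s)
  | var {ρT ρ : Env} {F : FEnv} {x l s w} :
      envCat ρT ρ x = some l → s l = some w →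
      EvalI 1 ρT ρ F (.var x) s w (clean ρT s)
  | assign {n} {ρT ρ : Env} {F : FEnv} {a s v s' x l} :
      EvalI n emptyEnv (envCat ρT ρ) F a s v s' →
      envCat ρT ρ x = some l → l ∈ storeDom s' →
      EvalI (n+1) ρT ρ F (.assign x a) s .unit (clean ρT (updFn s' l v))
  | seq {n m} {ρT ρ : Env} {F : FEnv} {a b s v s' v' s''} :
      EvalI n emptyEnv (envCat ρT ρ) F a s v s' → EvalI m ρT ρ F b s' v' s'' →
      EvalI (n+m+1) ρT ρ F (.seq a b) s v' s''
  | ifT {n m} {ρT ρ : Env} {F : FEnv} {c b e s s' v s''} :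
      EvalI n emptyEnv (envCat ρT ρ) F c s .tt s' → EvalI m ρT ρ F b s' v s'' →
      EvalI (n+m+1) ρT ρ F (.ite c b e) s v s''
  | ifF {n m} {ρT ρ : Env} {F : FEnv} {c b e s s' v s''} :
      EvalI n emptyEnv (envCat ρT ρ) F c s .ff s' → EvalI m ρT ρ F e s' v s'' →
      EvalI (n+m+1) ρT ρ F (.ite c b e) s v s''
  | letrec {n} {ρT ρ : Env} {F : FEnv} {f ps a b s v s'} :
      EvalI n ρT ρ ((f, Clos.mk ps a (envCat ρT ρ) F) :: F) b s v s' →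
      EvalI (n+1) ρT ρ F (.letrec f ps a b) s v s'
  | call {n m} {ρT ρ : Env} {F : FEnv} {f args s₁ vs s₂ xs b} {ρ' : Env} {F' : FEnv}
      {ls : List Loc} {v s'} :
      lookupF F f = some (Clos.mk xs b ρ' F') →
      EvalIArgs n (envCat ρT ρ) F args s₁ vs s₂ →
      ls.length = xs.length → vs.length = xs.length → ls.Nodup →
      (∀ l ∈ ls, l ∉ storeDom s₂ ∧ ¬ LocIn l ((f, Clos.mk xs b ρ' F') :: F')) →
      EvalI m (envOf xs ls) ρ' ((f, Clos.mk xs b ρ' F') :: F')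
        b (updStore s₂ ls vs) v s' →
      EvalI (n+m+1) ρT ρ F (.call f args) s₁ v (clean ρT s')

inductive EvalIArgs : Nat → Env → FEnv → List Tm → Store → List Val → Store → Prop
  | nil {ρ : Env} {F : FEnv} {s} : EvalIArgs 0 ρ F [] s [] s
  | cons {n m} {ρ : Env} {F : FEnv} {a as s v s' vs s''} :
      EvalI n emptyEnv ρ F a s v s' → EvalIArgs m ρ F as s' vs s'' →
      EvalIArgs (n+m) ρ F (a :: as) s (v :: vs) s''
end

/-- Restriction of an environment outside a list of variables. -/
def restrictEnv (ρ : Env) (ps : List Var) : Env :=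
  fun x => if x ∈ ps then none else ρ x

/-! ### Optimised big-step reduction rules (minimal stores and compact
      closures): identical to the intermediate rules except that the
      (letrec) rule builds compact closures -/

mutual
inductive EvalO : Nat → Env → Env → FEnv → Tm → Store → Val → Store → Prop
  | val {ρT ρ : Env} {F : FEnv} {v s} :
      EvalO 1 ρT ρ F (.val v) s v (clean ρT s)
  | var {ρT ρ : Env} {F : FEnv} {x l s w} :
      envCat ρT ρ x = some l → s l = some w →
      EvalO 1 ρT ρ F (.var x) s w (clean ρT s)
  | assign {n} {ρT ρ : Env} {F : FEnv} {a s v s' x l} :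
      EvalO n emptyEnv (envCat ρT ρ) F a s v s' →
      envCat ρT ρ x = some l → l ∈ storeDom s' →
      EvalO (n+1) ρT ρ F (.assign x a) s .unit (clean ρT (updFn s' l v))
  | seq {n m} {ρT ρ : Env} {F : FEnv} {a b s v s' v' s''} :
      EvalO n emptyEnv (envCat ρT ρ) F a s v s' → EvalO m ρT ρ F b s' v' s'' →
      EvalO (n+m+1) ρT ρ F (.seq a b) s v' s''
  | ifT {n m} {ρT ρ : Env} {F : FEnv} {c b e s s' v s''} :
      EvalO n emptyEnv (envCat ρT ρ) F c s .tt s' → EvalO m ρT ρ F b s' v s'' →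
      EvalO (n+m+1) ρT ρ F (.ite c b e) s v s''
  | ifF {n m} {ρT ρ : Env} {F : FEnv} {c b e s s' v s''} :
      EvalO n emptyEnv (envCat ρT ρ) F c s .ff s' → EvalO m ρT ρ F e s' v s'' →
      EvalO (n+m+1) ρT ρ F (.ite c b e) s v s''
  | letrec {n} {ρT ρ : Env} {F : FEnv} {f ps a b s v s'} :
      EvalO n ρT ρ ((f, Clos.mk ps a (restrictEnv (envCat ρT ρ) ps) F) :: F) b s v s' →
      EvalO (n+1) ρT ρ F (.letrec f ps a b) s v s'
  | call {n m} {ρT ρ : Env} {F : FEnv} {f args s₁ vs s₂ xs b} {ρ' : Env} {F' : FEnv}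
      {ls : List Loc} {v s'} :
      lookupF F f = some (Clos.mk xs b ρ' F') →
      EvalOArgs n (envCat ρT ρ) F args s₁ vs s₂ →
      ls.length = xs.length → vs.length = xs.length → ls.Nodup →
      (∀ l ∈ ls, l ∉ storeDom s₂ ∧ ¬ LocIn l ((f, Clos.mk xs b ρ' F') :: F')) →
      EvalO m (envOf xs ls) ρ' ((f, Clos.mk xs b ρ' F') :: F')
        b (updStore s₂ ls vs) v s' →
      EvalO (n+m+1) ρT ρ F (.call f args) s₁ v (clean ρT s')

inductive EvalOArgs : Nat → Env → FEnv → List Tm → Store → List Val → Store → Prop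
  | nil {ρ : Env} {F : FEnv} {s} : EvalOArgs 0 ρ F [] s [] s
  | cons {n m} {ρ : Env} {F : FEnv} {a as s v s' vs s''} :
      EvalO n emptyEnv ρ F a s v s' → EvalOArgs m ρ F as s' vs s'' →
      EvalOArgs (n+m) ρ F (a :: as) s (v :: vs) s''
end


/-- Lambda-lifted terms contain no `letrec` construct. -/
inductive NoLetrec : Tm → Prop
  | val {v} : NoLetrec (.val v)
  | var {x} : NoLetrec (.var x)
  | assign {x t} : NoLetrec t → NoLetrec (.assign x t)
  | ite {c t e} : NoLetrec c → NoLetrec t → NoLetrec e → NoLetrec (.ite c t e)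
  | seq {a b} : NoLetrec a → NoLetrec b → NoLetrec (.seq a b)
  | call {f args} : (∀ a ∈ args, NoLetrec a) → NoLetrec (.call f args)

mutual
/-- A closure of a lambda-lifted program: it captures the empty variable
environment and its body is letrec-free. -/
inductive ClosLifted : Clos → Prop
  | mk {ps b F} : NoLetrec b → FLifted F → ClosLifted (.mk ps b emptyEnv F)

/-- A function environment of a lambda-lifted program. -/
inductive FLifted : FEnv → Prop
  | nil : FLifted []
  | cons {f c F} : ClosLifted c → FLifted F → FLifted ((f, c) :: F)
end

/-!
Induction on the evaluation derivation. Every rule other than the call rule either writes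
through `ρ` or evaluates its premises under the same `ρ`. At a call, lambda lifting makes the
callee's closure capture the empty environment, so its body runs under the fresh parameter
locations alone; these lie outside the domain of the store, hence outside `dom s \ Im ρ`.
-/

theorem _root_.List.mem_of_lookup_eq_some {α β : Type*} [BEq α] [LawfulBEq α]
    {l : List (α × β)} {k : α} {b : β} (h : l.lookup k = some b) : (k, b) ∈ l := by
  obtain ⟨l₁, l₂, rfl, -⟩ := List.lookup_eq_some_iff.1 h
  simp

theorem FLifted.of_mem {F : FEnv} {f : Var} {c : Clos} (hF : FLifted F) (h : (f, c) ∈ F) :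
    ClosLifted c := by
  induction F with
  | nil => simp at h
  | cons p F ih =>
    cases hF with
    | cons hc hF =>
      simp only [List.mem_cons, Prod.mk.injEq] at h
      rcases h with ⟨rfl, rfl⟩ | h
      · exact hc
      · exact ih hF h

theorem FLifted.lookup {F : FEnv} {f : Var} {c : Clos} (hF : FLifted F)
    (h : lookupF F f = some c) : ClosLifted c :=
  hF.of_mem (List.mem_of_lookup_eq_some h)

theorem envCat_emptyEnv (ρ : Env) : envCat ρ emptyEnv = ρ := by
  funext x
  show (ρ x).orElse _ = ρ x
  cases ρ x <;> rfl

theorem envIm_envOf_subset (xs : List Var) (ls : List Loc) : envIm (envOf xs ls) ⊆ {l | l ∈ ls} :=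
  fun _ ⟨_, hx⟩ => (List.of_mem_zip (List.mem_of_lookup_eq_some hx)).2

theorem updStore_apply_of_not_mem {s : Store} {ls : List Loc} {vs : List Val} {l : Loc}
    (h : l ∉ ls) : updStore s ls vs l = s l := by
  have hnone : (ls.zip vs).lookup l = none :=
    List.lookup_eq_none_iff.2 fun p hp => bne_iff_ne.2 fun he => h (he ▸ (List.of_mem_zip hp).1)
  simp [updStore, hnone]

def AgreeOutside (ρ : Env) (s s' : Store) : Prop :=
  ∀ l ∈ storeDom s, l ∉ envIm ρ → s' l = s l

namespace AgreeOutside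

variable {ρ : Env} {s₁ s₂ s₃ : Store}

theorem refl (ρ : Env) (s : Store) : AgreeOutside ρ s s := fun _ _ _ => rfl

theorem mem_storeDom (h : AgreeOutside ρ s₁ s₂) {l : Loc} (hl : l ∈ storeDom s₁)
    (hρ : l ∉ envIm ρ) : l ∈ storeDom s₂ := by
  simpa [storeDom, h l hl hρ] using hl

theorem trans (h₁₂ : AgreeOutside ρ s₁ s₂) (h₂₃ : AgreeOutside ρ s₂ s₃) :
    AgreeOutside ρ s₁ s₃ := fun l hl hρ => by
  rw [h₂₃ l (h₁₂.mem_storeDom hl hρ) hρ, h₁₂ l hl hρ]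

theorem updFn (h : AgreeOutside ρ s₁ s₂) {x : Var} {l₀ : Loc} (hx : ρ x = some l₀) (v : Val) :
    AgreeOutside ρ s₁ (CPC.updFn s₂ l₀ v) := fun l hl hρ => by
  have hne : l ≠ l₀ := fun he => hρ ⟨x, he ▸ hx⟩
  rw [CPC.updFn, if_neg hne, h l hl hρ]

theorem of_call {xs : List Var} {ls : List Loc} {vs : List Val} {s' : Store}
    (hargs : AgreeOutside ρ s₁ s₂) (hfresh : ∀ l ∈ ls, l ∉ storeDom s₂)
    (hbody : AgreeOutside (envOf xs ls) (updStore s₂ ls vs) s') : AgreeOutside ρ s₁ s' := by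
  intro l hl hρ
  have hl₂ := hargs.mem_storeDom hl hρ
  have hls : l ∉ ls := fun h => hfresh l h hl₂
  have hupd : updStore s₂ ls vs l = s₂ l := updStore_apply_of_not_mem hls
  rw [hbody l (by simpa [storeDom, hupd] using hl₂) (fun h => hls (envIm_envOf_subset xs ls h)),
    hupd, hargs l hl hρ]

end AgreeOutside

theorem EvalN.agreeOutside_of_lifted {n : Nat} {ρ : Env} {F : FEnv} {M : Tm} {s s' : Store}
    {v : Val} (h : EvalN n ρ F M s v s') : NoLetrec M → FLifted F → AgreeOutside ρ s s' := by
  induction h using EvalN.rec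
    (motive_2 := fun _ ρ F as s _ s' _ =>
      (∀ a ∈ as, NoLetrec a) → FLifted F → AgreeOutside ρ s s') with
  | val | var => exact fun _ _ => AgreeOutside.refl _ _
  | nil => exact AgreeOutside.refl _ _
  | assign _ hx _ ih =>
    intro hM hF
    cases hM with | assign ha => exact (ih ha hF).updFn hx _
  | seq _ _ iha ihb =>
    intro hM hF
    cases hM with | seq ha hb => exact (iha ha hF).trans (ihb hb hF)
  | ifT _ _ ihc iht =>
    intro hM hF
    cases hM with | ite hc ht _ => exact (ihc hc hF).trans (iht ht hF)
  | ifF _ _ ihc ihe =>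
    intro hM hF
    cases hM with | ite hc _ he => exact (ihc hc hF).trans (ihe he hF)
  | letrec => rintro ⟨⟩
  | call hlk _ _ _ _ hfresh _ ihargs ihbody =>
    intro hM hF
    cases hM with | call hargs => ?_
    obtain ⟨hb, hF'⟩ := hF.lookup hlk
    have hbody := ihbody hb (.cons (.mk hb hF') hF')
    rw [envCat_emptyEnv] at hbody
    exact (ihargs hargs hF).of_call (fun l hl => (hfresh l hl).1) hbody
  | cons _ _ iha ihas =>
    rename_i hM hF
    exact (iha (hM _ List.mem_cons_self) hF).trans
      (ihas (fun a ha => hM a (List.mem_cons_of_mem _ ha)) hF)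

/-- lambda-lifted terms only modify locations in the image
of their environment. -/
theorem lifted_store_invariant
    {n : Nat} {ρ : Env} {F : FEnv} {M : Tm} {s s' : Store} {v : Val}
    (hM : NoLetrec M) (hF : FLifted F)
    (h : EvalN n ρ F M s v s') :
    ∀ l ∈ storeDom s, l ∉ envIm ρ → s' l = s l :=
  h.agreeOutside_of_lifted hM hF

end CPC
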